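/- There exists a partial order on ℕ whose coded set is co-c.e. and which is not isomorphic to any partial order on ℕ whose coded set is computable. -/

import Mathlib

/-!
The order is a disjoint union of crowns: the `m`-th one is a cycle of length `2 (m + 2)` whose
even vertices lie below their neighbours, with one extra point below vertex `1` exactly when the
`m`-th program does not halt on `0`. Removing that relation once the program halts keeps the order
co-c.e.

An injective homomorphism from a cycle into a cycle forces the lengths to agree, and a vertex of
a crown has three distinct neighbours only if it carries the extra point. Hence the `n`-th crown
with its extra point maps injectively into the comparability graph of the order exactly when the
`n`-th program does not halt. In a computable isomorphic copy such a map is a finite, checkable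
witness, so the complement of the halting problem would be c.e.
-/

namespace CEOrders

/-- The coded set of a binary relation on ℕ, via the pairing function `Nat.pair`. -/
def codedSet (R : ℕ → ℕ → Prop) : Set ℕ := {n | R n.unpair.1 n.unpair.2}

/-- A set of naturals is c.e. (computably enumerable). -/
def SetCE (A : Set ℕ) : Prop := REPred (· ∈ A)

/-- A set of naturals is co-c.e. -/
def SetCoCE (A : Set ℕ) : Prop := REPred (· ∉ A)

/-- A set of naturals is computable. -/
def SetComputable (A : Set ℕ) : Prop := ComputablePred (· ∈ A)

/-- A partial order on ℕ: reflexive, antisymmetric, transitive. -/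
def PartialOrderRel (R : ℕ → ℕ → Prop) : Prop :=
  (∀ a, R a a) ∧ (∀ a b, R a b → R b a → a = b) ∧ (∀ a b c, R a b → R b c → R a c)

/-- A preorder on ℕ: reflexive, transitive. -/
def PreorderRel (R : ℕ → ℕ → Prop) : Prop :=
  (∀ a, R a a) ∧ (∀ a b c, R a b → R b c → R a c)

/-- A (simple, undirected) graph on ℕ: irreflexive, symmetric. -/
def GraphRel (R : ℕ → ℕ → Prop) : Prop :=
  (∀ a, ¬ R a a) ∧ (∀ a b, R a b → R b a)

/-- Isomorphism of binary relations on ℕ. -/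
def Isomorphic (R Q : ℕ → ℕ → Prop) : Prop :=
  ∃ f : ℕ → ℕ, Function.Bijective f ∧ ∀ a b, R a b ↔ Q (f a) (f b)

/-- A chain for a relation: any two elements comparable. -/
def ChainFor (R : ℕ → ℕ → Prop) (C : Set ℕ) : Prop :=
  ∀ a ∈ C, ∀ b ∈ C, R a b ∨ R b a

/-- An antichain for a relation: any two distinct elements incomparable. -/
def AntichainFor (R : ℕ → ℕ → Prop) (C : Set ℕ) : Prop :=
  ∀ a ∈ C, ∀ b ∈ C, a ≠ b → ¬ R a b ∧ ¬ R b a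

/-- Partial functions computable relative to an oracle `g`. -/
inductive RecursiveIn (g : ℕ →. ℕ) : (ℕ →. ℕ) → Prop
  | zero : RecursiveIn g (pure 0)
  | succ : RecursiveIn g Nat.succ
  | left : RecursiveIn g ↑fun n : ℕ => n.unpair.1
  | right : RecursiveIn g ↑fun n : ℕ => n.unpair.2
  | oracle : RecursiveIn g g
  | pair {f h} : RecursiveIn g f → RecursiveIn g h →
      RecursiveIn g fun n => Nat.pair <$> f n <*> h n
  | comp {f h} : RecursiveIn g f → RecursiveIn g h →
      RecursiveIn g fun n => h n >>= f
  | prec {f h} : RecursiveIn g f → RecursiveIn g h →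
      RecursiveIn g (Nat.unpaired fun a n =>
        n.rec (f a) fun y IH => do let i ← IH; h (Nat.pair a (Nat.pair y i)))
  | rfind {f} : RecursiveIn g f →
      RecursiveIn g fun a => Nat.rfind fun n => (fun m => m = 0) <$> f (Nat.pair a n)

open Classical in
/-- The characteristic (partial) function of a set of naturals. -/
noncomputable def charFun (A : Set ℕ) : ℕ →. ℕ :=
  fun n => Part.some (if n ∈ A then 1 else 0)

/-- Turing reducibility between sets of naturals. -/
def TuringLE (A B : Set ℕ) : Prop := RecursiveIn (charFun B) (charFun A)

/-- Turing equivalence between sets of naturals. -/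
def TuringEquiv (A B : Set ℕ) : Prop := TuringLE A B ∧ TuringLE B A

/-- The halting set ∅'. -/
def HaltingSet : Set ℕ :=
  {n | ((Denumerable.ofNat Nat.Partrec.Code n).eval n).Dom}

/-- A relation on ℕ is automorphically nontrivial. -/
def AutNontrivial (R : ℕ → ℕ → Prop) : Prop :=
  ¬ ∃ F : Finset ℕ, ∀ f : ℕ → ℕ, Function.Bijective f → (∀ x ∈ F, f x = x) →
      ∀ a b, R a b ↔ R (f a) (f b)

end CEOrders

open Function Relation

section Computability

variable {α β : Type*} [Primcodable α] [Primcodable β]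

theorem ComputablePred.comp {p : β → Prop} {f : α → β} (hp : ComputablePred p)
    (hf : Computable f) : ComputablePred fun a => p (f a) := by
  obtain ⟨_, h⟩ := hp
  exact ⟨_, h.comp hf⟩

theorem ComputablePred.and {p q : α → Prop} (hp : ComputablePred p) (hq : ComputablePred q) :
    ComputablePred fun a => p a ∧ q a := by
  classical
  exact ⟨inferInstance, (Primrec.and.to_comp.comp hp.decide hq.decide).of_eq fun a => by simp⟩

theorem ComputablePred.or {p q : α → Prop} (hp : ComputablePred p) (hq : ComputablePred q) :
    ComputablePred fun a => p a ∨ q a := by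
  classical
  exact ⟨inferInstance, (Primrec.or.to_comp.comp hp.decide hq.decide).of_eq fun a => by simp⟩

theorem ComputablePred.imp {p q : α → Prop} (hp : ComputablePred p) (hq : ComputablePred q) :
    ComputablePred fun a => p a → q a :=
  (hp.not.or hq).of_eq fun _ => imp_iff_not_or.symm

theorem ComputablePred.forall_lt {p : α × ℕ → Prop} {f : α → ℕ} (hf : Computable f)
    (hp : ComputablePred p) : ComputablePred fun a => ∀ i < f a, p (a, i) := by
  classical
  have hstep : Computable₂ fun (a : α) (q : ℕ × Bool) => q.2 && decide (p (a, q.1)) :=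
    (Primrec.and.to_comp.comp (Computable.snd.comp Computable.snd)
      (hp.decide.comp (Computable.fst.pair (Computable.fst.comp Computable.snd)))).to₂
  refine ⟨inferInstance, (Computable.nat_rec hf (Computable.const true) hstep).of_eq fun a => ?_⟩
  show _ = decide (∀ i < f a, p (a, i))
  induction f a with
  | zero => simp
  | succ n ih => simp only [ih, ← Bool.decide_and, Nat.forall_lt_succ_right]

theorem ComputablePred.rePred_exists {r : α × ℕ → Prop} (hr : ComputablePred r) :
    REPred fun a => ∃ n, r (a, n) := by
  classical
  have hr' : Computable₂ fun a n => decide (r (a, n)) := hr.decide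
  refine (Partrec.rfind hr'.partrec₂).dom_re.of_eq fun a => ?_
  simp [Nat.rfind_dom]

theorem REPred.comp {p : β → Prop} {f : α → β} (hp : REPred p) (hf : Computable f) :
    REPred fun a => p (f a) :=
  Partrec.comp hp hf

theorem REPred.ite {c p q : α → Prop} [DecidablePred c] (hc : ComputablePred c) (hp : REPred p)
    (hq : REPred q) : REPred fun a => if c a then p a else q a :=
  (Partrec.cond hc.decide hp hq).of_eq fun a => by
    by_cases h : c a <;> exact Part.ext' (by simp [Part.assert, h]) (by simp)

end Computability

namespace CEOrders

def cycleAdj (N i j : ℕ) : Prop :=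
  i < N ∧ j < N ∧ (i + 1 = j ∨ j + 1 = i ∨ i + 1 = N ∧ j = 0 ∨ j + 1 = N ∧ i = 0)

def pendantCycleAdj (N : ℕ) (b : Prop) (i j : ℕ) : Prop :=
  cycleAdj N i j ∨ b ∧ (i = N ∧ j = 1 ∨ i = 1 ∧ j = N)

section Cycle

variable {N M i j : ℕ}

theorem cycleAdj.symm (h : cycleAdj N i j) : cycleAdj N j i := by
  unfold cycleAdj at *; omega

theorem exists_cycleAdj_ne (hN : 3 ≤ N) (hi : i < N) :
    ∃ j k, cycleAdj N i j ∧ cycleAdj N i k ∧ j ≠ k := by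
  refine ⟨if i + 1 = N then 0 else i + 1, if i = 0 then N - 1 else i - 1, ?_, ?_, ?_⟩ <;>
    (try unfold cycleAdj) <;> split_ifs <;> omega

theorem cycleAdj.eq_or_eq_or_eq {a b c : ℕ} (ha : cycleAdj N i a) (hb : cycleAdj N i b)
    (hc : cycleAdj N i c) : a = b ∨ a = c ∨ b = c := by
  unfold cycleAdj at *; omega

theorem range_subset_of_cycleAdj_closed {S : Finset ℕ} {a : ℕ} (ha : a ∈ S) (haM : a < M)
    (hS : ∀ a ∈ S, ∀ b, cycleAdj M a b → b ∈ S) : Finset.range M ⊆ S := by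
  have hup : ∀ t, a + t < M → a + t ∈ S := by
    intro t
    induction t with
    | zero => exact fun _ => ha
    | succ t ih => exact fun ht => hS _ (ih (by omega)) _ (by unfold cycleAdj; omega)
  have hdown : ∀ t ≤ a, a - t ∈ S := by
    intro t
    induction t with
    | zero => exact fun _ => ha
    | succ t ih => exact fun ht => hS _ (ih (by omega)) _ (by unfold cycleAdj; omega)
  intro c hc
  rw [Finset.mem_range] at hc
  rcases le_or_gt a c with h | h
  · simpa [Nat.add_sub_cancel' h] using hup (c - a) (by omega)
  · simpa [Nat.sub_sub_self h.le] using hdown (a - c) (by omega)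

/-- The image contains both neighbours of each of its points, hence is the whole target cycle. -/
theorem eq_of_injOn_cycleAdj (hN : 3 ≤ N) {σ : ℕ → ℕ} (hσ : Set.InjOn σ (Set.Iio N))
    (hadj : ∀ i j, cycleAdj N i j → cycleAdj M (σ i) (σ j)) : N = M := by
  classical
  set S := (Finset.range N).image σ
  have hcard : S.card = N := by
    rw [Finset.card_image_of_injOn (by simpa using hσ), Finset.card_range]
  have hsub : S ⊆ Finset.range M := by
    simp only [S, Finset.image_subset_iff, Finset.mem_range]
    intro i hi
    obtain ⟨j, -, hj, -⟩ := exists_cycleAdj_ne hN hi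
    exact (hadj i j hj).1
  have hclosed : ∀ a ∈ S, ∀ b, cycleAdj M a b → b ∈ S := by
    simp only [S, Finset.mem_image, Finset.mem_range]
    rintro _ ⟨i, hi, rfl⟩ b hb
    obtain ⟨j, k, hj, hk, hjk⟩ := exists_cycleAdj_ne hN hi
    rcases hb.eq_or_eq_or_eq (hadj i j hj) (hadj i k hk) with rfl | rfl | h
    · exact ⟨j, hj.2.1, rfl⟩
    · exact ⟨k, hk.2.1, rfl⟩
    · exact absurd (hσ hj.2.1 hk.2.1 h) hjk
  have h0 : σ 0 ∈ S := Finset.mem_image_of_mem σ (Finset.mem_range.2 (by omega))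
  have hsup := range_subset_of_cycleAdj_closed h0 (Finset.mem_range.1 (hsub h0)) hclosed
  rw [← hcard, Finset.Subset.antisymm hsub hsup, Finset.card_range]

theorem pendantCycleAdj.ne {b : Prop} (hN : 2 ≤ N) (h : pendantCycleAdj N b i j) : i ≠ j := by
  rcases h with h | ⟨-, h⟩ <;> (try unfold cycleAdj at h) <;> omega

theorem pendantCycleAdj.le {b : Prop} (hN : 1 ≤ N) (h : pendantCycleAdj N b i j) :
    i ≤ N ∧ j ≤ N := by
  rcases h with h | ⟨-, h⟩ <;> (try unfold cycleAdj at h) <;> constructor <;> omega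

/-- Points off the cycle have at most one neighbour and cycle vertices at most two on the cycle,
so the image of vertex `1`, which has three neighbours, carries the pendant edge. -/
theorem eq_and_of_injOn_pendantCycleAdj {b : Prop} (hN : 3 ≤ N) {σ : ℕ → ℕ}
    (hσ : Set.InjOn σ (Set.Iic N))
    (hadj : ∀ i j, pendantCycleAdj N True i j → pendantCycleAdj M b (σ i) (σ j)) :
    N = M ∧ b := by
  have hinj : ∀ {i j}, i ≤ N → j ≤ N → i ≠ j → σ i ≠ σ j := fun hi hj hij h => hij (hσ hi hj h)
  have hlt : ∀ i < N, σ i < M := by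
    intro i hi
    obtain ⟨j, k, hj, hk, hjk⟩ := exists_cycleAdj_ne hN hi
    have h1 := hadj i j (Or.inl hj)
    have h2 := hadj i k (Or.inl hk)
    have := hinj hj.2.1.le hk.2.1.le hjk
    unfold pendantCycleAdj cycleAdj at h1 h2
    by_contra hM
    rcases h1 with h1 | ⟨-, h1⟩ <;> rcases h2 with h2 | ⟨-, h2⟩ <;> omega
  have hcycle : ∀ i j, cycleAdj N i j → cycleAdj M (σ i) (σ j) := by
    intro i j hij
    have hi := hlt i hij.1
    have hj := hlt j hij.2.1
    rcases hadj i j (Or.inl hij) with h | ⟨-, h⟩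
    · exact h
    · omega
  refine ⟨eq_of_injOn_cycleAdj hN (hσ.mono Set.Iio_subset_Iic_self) hcycle, ?_⟩
  have h10 : cycleAdj N 1 0 := by unfold cycleAdj; omega
  have h12 : cycleAdj N 1 2 := by unfold cycleAdj; omega
  rcases hadj 1 N (Or.inr ⟨trivial, Or.inr ⟨rfl, rfl⟩⟩) with h | ⟨hb, -⟩
  · rcases h.eq_or_eq_or_eq (hcycle 1 0 h10) (hcycle 1 2 h12) with h | h | h
    · exact absurd h (hinj le_rfl (by omega) (by omega))
    · exact absurd h (hinj le_rfl (by omega) (by omega))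
    · exact absurd h (hinj (by omega) (by omega) (by omega))
  · exact hb

end Cycle

theorem primrecPred_cycleAdj : PrimrecPred fun t : ℕ × ℕ × ℕ => cycleAdj t.1 t.2.1 t.2.2 := by
  have hN : Primrec fun t : ℕ × ℕ × ℕ => t.1 := Primrec.fst
  have hi : Primrec fun t : ℕ × ℕ × ℕ => t.2.1 := Primrec.fst.comp Primrec.snd
  have hj : Primrec fun t : ℕ × ℕ × ℕ => t.2.2 := Primrec.snd.comp Primrec.snd
  have succ {f : ℕ × ℕ × ℕ → ℕ} (hf : Primrec f) : Primrec fun t => f t + 1 :=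
    Primrec.nat_add.comp hf (Primrec.const 1)
  have zero {f : ℕ × ℕ × ℕ → ℕ} (hf : Primrec f) : PrimrecPred fun t => f t = 0 :=
    Primrec.eq.comp hf (Primrec.const 0)
  exact (Primrec.nat_lt.comp hi hN).and <| (Primrec.nat_lt.comp hj hN).and <|
    (Primrec.eq.comp (succ hi) hj).or <| (Primrec.eq.comp (succ hj) hi).or <|
      ((Primrec.eq.comp (succ hi) hN).and (zero hj)).or
        ((Primrec.eq.comp (succ hj) hN).and (zero hi))

theorem primrecPred_pendantCycleAdj :
    PrimrecPred fun t : ℕ × ℕ × ℕ => pendantCycleAdj t.1 True t.2.1 t.2.2 := by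
  have hN : Primrec fun t : ℕ × ℕ × ℕ => t.1 := Primrec.fst
  have hi : Primrec fun t : ℕ × ℕ × ℕ => t.2.1 := Primrec.fst.comp Primrec.snd
  have hj : Primrec fun t : ℕ × ℕ × ℕ => t.2.2 := Primrec.snd.comp Primrec.snd
  have hpend : PrimrecPred fun t : ℕ × ℕ × ℕ => t.2.1 = t.1 ∧ t.2.2 = 1 ∨ t.2.1 = 1 ∧ t.2.2 = t.1 :=
    ((Primrec.eq.comp hi hN).and (Primrec.eq.comp hj (Primrec.const 1))).or
      ((Primrec.eq.comp hi (Primrec.const 1)).and (Primrec.eq.comp hj hN))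
  exact (primrecPred_cycleAdj.or hpend).of_eq fun t => by simp [pendantCycleAdj]

def IsPendantCycleIn (R : ℕ → ℕ → Prop) (N : ℕ) (φ : ℕ → ℕ) : Prop :=
  Set.InjOn φ (Set.Iic N) ∧ ∀ i j, pendantCycleAdj N True i j → SymmGen R (φ i) (φ j)

section IsPendantCycleIn

variable {R Q : ℕ → ℕ → Prop} {N : ℕ} {φ : ℕ → ℕ}

theorem IsPendantCycleIn.map {f : ℕ → ℕ} (hf : Injective f) (hRQ : ∀ a b, R a b → Q (f a) (f b))
    (h : IsPendantCycleIn R N φ) : IsPendantCycleIn Q N (f ∘ φ) :=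
  ⟨hf.comp_injOn h.1, fun i j hij => (h.2 i j hij).imp (hRQ _ _) (hRQ _ _)⟩

theorem Isomorphic.symm (h : Isomorphic R Q) : Isomorphic Q R := by
  obtain ⟨f, hf, hRQ⟩ := h
  refine ⟨(Equiv.ofBijective f hf).symm, Equiv.bijective _, fun a b => ?_⟩
  rw [hRQ, Equiv.ofBijective_apply_symm_apply f, Equiv.ofBijective_apply_symm_apply f]

theorem Isomorphic.exists_isPendantCycleIn (h : Isomorphic R Q) (hφ : IsPendantCycleIn R N φ) :
    ∃ ψ, IsPendantCycleIn Q N ψ := by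
  obtain ⟨f, hf, hRQ⟩ := h
  exact ⟨_, hφ.map hf.1 fun a b => (hRQ a b).1⟩

theorem isPendantCycleIn_iff_forall_le (hN : 1 ≤ N) :
    IsPendantCycleIn R N φ ↔ ∀ i ≤ N, ∀ j ≤ N,
      (φ i = φ j → i = j) ∧ (pendantCycleAdj N True i j → SymmGen R (φ i) (φ j)) := by
  refine ⟨fun h i hi j hj => ⟨fun hij => h.1 hi hj hij, h.2 i j⟩,
    fun h => ⟨fun i hi j hj hij => (h i hi j hj).1 hij, fun i j hij => ?_⟩⟩
  obtain ⟨hi, hj⟩ := hij.le hN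
  exact (h i hi j hj).2 hij

def listFun (k i : ℕ) : ℕ := (Denumerable.ofNat (List ℕ) k).getD i 0

theorem IsPendantCycleIn.exists_listFun (hN : 1 ≤ N) (h : IsPendantCycleIn R N φ) :
    ∃ k, IsPendantCycleIn R N (listFun k) := by
  have hφ : ∀ i ≤ N, listFun (Encodable.encode ((List.range (N + 1)).map φ)) i = φ i := by
    intro i hi
    simp [listFun, List.getD_eq_getElem?_getD, Nat.lt_succ_of_le hi]
  refine ⟨Encodable.encode ((List.range (N + 1)).map φ),
    (isPendantCycleIn_iff_forall_le hN).2 fun i hi j hj => ?_⟩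
  rw [hφ i hi, hφ j hj]
  exact (isPendantCycleIn_iff_forall_le hN).1 h i hi j hj

end IsPendantCycleIn

def cycleLength (m : ℕ) : ℕ := 2 * (m + 2)

theorem primrec_cycleLength : Primrec cycleLength :=
  Primrec.nat_mul.comp (Primrec.const 2) (Primrec.nat_add.comp Primrec.id (Primrec.const 2))

/-- `Nat.pair m i` is vertex `i` of the `m`-th crown: each even vertex of the cycle of length
`cycleLength m` lies below its two neighbours, and the pendant vertex `cycleLength m` lies below
vertex `1` exactly when `A m`. -/
def crownOrder (A : ℕ → Prop) (x y : ℕ) : Prop :=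
  x = y ∨ x.unpair.1 = y.unpair.1 ∧
    (x.unpair.2 % 2 = 0 ∧ cycleAdj (cycleLength x.unpair.1) x.unpair.2 y.unpair.2 ∨
      x.unpair.2 = cycleLength x.unpair.1 ∧ y.unpair.2 = 1 ∧ A x.unpair.1)

section CrownOrder

variable {A : ℕ → Prop} {x y n : ℕ}

theorem crownOrder.mod_two_eq (h : crownOrder A x y) (hxy : x ≠ y) :
    x.unpair.2 % 2 = 0 ∧ y.unpair.2 % 2 = 1 := by
  unfold crownOrder cycleAdj cycleLength at h
  omega

theorem partialOrderRel_crownOrder (A : ℕ → Prop) : PartialOrderRel (crownOrder A) := by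
  refine ⟨fun _ => Or.inl rfl, fun x y hxy hyx => ?_, fun x y z hxy hyz => ?_⟩
  · by_contra hne
    have := hxy.mod_two_eq hne
    have := hyx.mod_two_eq (Ne.symm hne)
    omega
  · by_cases hx : x = y
    · rwa [hx]
    by_cases hy : y = z
    · rwa [← hy]
    have := hxy.mod_two_eq hx
    have := hyz.mod_two_eq hy
    omega

theorem symmGen_crownOrder_iff (hxy : x ≠ y) :
    SymmGen (crownOrder A) x y ↔ x.unpair.1 = y.unpair.1 ∧
      pendantCycleAdj (cycleLength x.unpair.1) (A x.unpair.1) x.unpair.2 y.unpair.2 := by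
  unfold SymmGen crownOrder pendantCycleAdj
  constructor
  · rintro ((h | ⟨hm, ⟨-, h⟩ | ⟨hi, hj, hA⟩⟩) | (h | ⟨hm, ⟨-, h⟩ | ⟨hi, hj, hA⟩⟩))
    · exact absurd h hxy
    · exact ⟨hm, Or.inl h⟩
    · exact ⟨hm, Or.inr ⟨hA, Or.inl ⟨hi, hj⟩⟩⟩
    · exact absurd h.symm hxy
    · exact ⟨hm.symm, Or.inl (hm ▸ h.symm)⟩
    · exact ⟨hm.symm, Or.inr ⟨hm ▸ hA, Or.inr ⟨hj, hm ▸ hi⟩⟩⟩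
  · rintro ⟨hm, h | ⟨hA, ⟨hi, hj⟩ | ⟨hi, hj⟩⟩⟩
    · rcases Nat.mod_two_eq_zero_or_one x.unpair.2 with hx | hx
      · exact Or.inl (Or.inr ⟨hm, Or.inl ⟨hx, h⟩⟩)
      · refine Or.inr (Or.inr ⟨hm.symm, Or.inl ⟨?_, hm ▸ h.symm⟩⟩)
        unfold cycleAdj cycleLength at h
        omega
    · exact Or.inl (Or.inr ⟨hm, Or.inr ⟨hi, hj, hA⟩⟩)
    · exact Or.inr (Or.inr ⟨hm.symm, Or.inr ⟨hm ▸ hj, hi, hm ▸ hA⟩⟩)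

theorem not_crownOrder_iff : ¬crownOrder A x y ↔
    if x.unpair.1 = y.unpair.1 ∧ x.unpair.2 = cycleLength x.unpair.1 ∧ y.unpair.2 = 1 then
      ¬A x.unpair.1 else ¬crownOrder (fun _ => False) x y := by
  unfold crownOrder cycleAdj cycleLength
  split_ifs with h
  · constructor
    · intro hn hA
      exact hn (Or.inr ⟨h.1, Or.inr ⟨h.2.1, h.2.2, hA⟩⟩)
    · rintro hA (rfl | ⟨-, ⟨-, hc⟩ | ⟨-, -, hA'⟩⟩)
      · omega
      · omega
      · exact hA hA'
  · simp only [and_false, or_false]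
    constructor
    · rintro hn (h' | ⟨hm, hc⟩)
      · exact hn (Or.inl h')
      · exact hn (Or.inr ⟨hm, Or.inl hc⟩)
    · rintro hn (h' | ⟨hm, hc | ⟨hi, hj, -⟩⟩)
      · exact hn (Or.inl h')
      · exact hn (Or.inr ⟨hm, hc⟩)
      · exact h ⟨hm, hi, hj⟩

theorem setCoCE_crownOrder (hA : REPred fun m => ¬A m) :
    SetCoCE (codedSet (crownOrder A)) := by
  classical
  have hx : Primrec fun z : ℕ => z.unpair.1 := Primrec.fst.comp Primrec.unpair
  have hy : Primrec fun z : ℕ => z.unpair.2 := Primrec.snd.comp Primrec.unpair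
  have hm := Primrec.fst.comp (Primrec.unpair.comp hx)
  have hm' := Primrec.fst.comp (Primrec.unpair.comp hy)
  have hi := Primrec.snd.comp (Primrec.unpair.comp hx)
  have hj := Primrec.snd.comp (Primrec.unpair.comp hy)
  have hlen := primrec_cycleLength.comp hm
  have hpend : PrimrecPred fun z : ℕ => z.unpair.1.unpair.1 = z.unpair.2.unpair.1 ∧
      z.unpair.1.unpair.2 = cycleLength z.unpair.1.unpair.1 ∧ z.unpair.2.unpair.2 = 1 :=
    (Primrec.eq.comp hm hm').and
      ((Primrec.eq.comp hi hlen).and (Primrec.eq.comp hj (Primrec.const 1)))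
  have hcycle : PrimrecPred fun z : ℕ => ¬crownOrder (fun _ => False) z.unpair.1 z.unpair.2 :=
    ((Primrec.eq.comp hx hy).or <| (Primrec.eq.comp hm hm').and <|
      (Primrec.eq.comp (Primrec.nat_mod.comp hi (Primrec.const 2)) (Primrec.const 0)).and
        (primrecPred_cycleAdj.comp (hlen.pair (hi.pair hj)))).not.of_eq fun z => by
      simp [crownOrder]
  exact (REPred.ite hpend.computablePred (hA.comp hm.to_comp) hcycle.computablePred.to_re).of_eq
    fun z => not_crownOrder_iff.symm

theorem isPendantCycleIn_crownOrder (hA : A n) :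
    IsPendantCycleIn (crownOrder A) (cycleLength n) (Nat.pair n) := by
  refine ⟨fun i _ j _ h => (Nat.pair_eq_pair.1 h).2, fun i j hij => ?_⟩
  have hne : Nat.pair n i ≠ Nat.pair n j :=
    fun h => hij.ne (by unfold cycleLength; omega) (Nat.pair_eq_pair.1 h).2
  rw [symmGen_crownOrder_iff hne]
  simp only [Nat.unpair_pair, true_and]
  exact hij.imp_right fun h => ⟨hA, h.2⟩

theorem IsPendantCycleIn.crownOrder_adj {N : ℕ} {φ : ℕ → ℕ} (hN : 2 ≤ N)
    (h : IsPendantCycleIn (crownOrder A) N φ) {i j : ℕ} (hij : pendantCycleAdj N True i j) :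
    (φ i).unpair.1 = (φ j).unpair.1 ∧ pendantCycleAdj (cycleLength (φ i).unpair.1)
      (A (φ i).unpair.1) (φ i).unpair.2 (φ j).unpair.2 := by
  obtain ⟨hi, hj⟩ := hij.le (by omega)
  refine (symmGen_crownOrder_iff fun hφ => ?_).1 (h.2 i j hij)
  exact hij.ne hN (h.1 hi hj hφ)

theorem IsPendantCycleIn.unpair_fst_eq_of_crownOrder {N : ℕ} {φ : ℕ → ℕ} (hN : 2 ≤ N)
    (h : IsPendantCycleIn (crownOrder A) N φ) : ∀ i ≤ N, (φ i).unpair.1 = (φ 0).unpair.1 := by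
  have hcycle : ∀ i < N, (φ i).unpair.1 = (φ 0).unpair.1 := by
    intro i hi
    induction i with
    | zero => rfl
    | succ i ih =>
      rw [← ih (by omega)]
      exact (h.crownOrder_adj hN (Or.inl (by unfold cycleAdj; omega))).1.symm
  intro i hi
  rcases hi.lt_or_eq with hi | rfl
  · exact hcycle i hi
  · rw [← hcycle 1 (by omega)]
    exact (h.crownOrder_adj hN (Or.inr ⟨trivial, Or.inl ⟨rfl, rfl⟩⟩)).1

theorem IsPendantCycleIn.crownOrder {φ : ℕ → ℕ}
    (h : IsPendantCycleIn (crownOrder A) (cycleLength n) φ) : A n := by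
  have hN : 3 ≤ cycleLength n := by unfold cycleLength; omega
  have hm := h.unpair_fst_eq_of_crownOrder (by omega)
  have hσ : Set.InjOn (fun i => (φ i).unpair.2) (Set.Iic (cycleLength n)) := by
    intro i hi j hj hφ
    refine h.1 hi hj ?_
    rw [← Nat.pair_unpair (φ i), ← Nat.pair_unpair (φ j), hm i hi, hm j hj]
    exact congrArg _ hφ
  obtain ⟨hnm, hA⟩ := eq_and_of_injOn_pendantCycleAdj hN hσ fun i j hij => by
    have := (h.crownOrder_adj (by omega) hij).2
    rwa [hm i (hij.le (by omega)).1] at this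
  rwa [show n = (φ 0).unpair.1 by unfold cycleLength at hnm; omega]

end CrownOrder

theorem computablePred_isPendantCycleIn {R : ℕ → ℕ → Prop}
    (hR : ComputablePred fun p : ℕ × ℕ => R p.1 p.2) :
    ComputablePred fun x : ℕ × ℕ => IsPendantCycleIn R (cycleLength x.1) (listFun x.2) := by
  have hlist : Primrec₂ listFun :=
    (Primrec.list_getD 0).comp ((Primrec.ofNat (List ℕ)).comp Primrec.fst) Primrec.snd
  have hx : Primrec fun z : ((ℕ × ℕ) × ℕ) × ℕ => z.1.1 := Primrec.fst.comp Primrec.fst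
  have hi : Primrec fun z : ((ℕ × ℕ) × ℕ) × ℕ => z.1.2 := Primrec.snd.comp Primrec.fst
  have hj : Primrec fun z : ((ℕ × ℕ) × ℕ) × ℕ => z.2 := Primrec.snd
  have hN := primrec_cycleLength.comp (Primrec.fst.comp hx)
  have hvi := hlist.comp (Primrec.snd.comp hx) hi
  have hvj := hlist.comp (Primrec.snd.comp hx) hj
  have hinj : PrimrecPred fun z : ((ℕ × ℕ) × ℕ) × ℕ =>
      listFun z.1.1.2 z.1.2 = listFun z.1.1.2 z.2 → z.1.2 = z.2 :=
    ((Primrec.eq.comp hvi hvj).not.or (Primrec.eq.comp hi hj)).of_eq fun _ => imp_iff_not_or.symm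
  have hadj : ComputablePred fun z : ((ℕ × ℕ) × ℕ) × ℕ =>
      pendantCycleAdj (cycleLength z.1.1.1) True z.1.2 z.2 →
        SymmGen R (listFun z.1.1.2 z.1.2) (listFun z.1.1.2 z.2) :=
    (primrecPred_pendantCycleAdj.comp (hN.pair (hi.pair hj))).computablePred.imp
      ((hR.comp (hvi.pair hvj).to_comp).or (hR.comp (hvj.pair hvi).to_comp))
  have hlen : Primrec fun x : ℕ × ℕ => cycleLength x.1 + 1 :=
    Primrec.succ.comp (primrec_cycleLength.comp Primrec.fst)
  refine (ComputablePred.forall_lt hlen.to_comp (ComputablePred.forall_lt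
    (hlen.comp Primrec.fst).to_comp (hinj.computablePred.and hadj))).of_eq fun x => ?_
  simp only [Nat.lt_succ_iff]
  exact (isPendantCycleIn_iff_forall_le (by unfold cycleLength; omega)).symm

theorem rePred_of_isomorphic_crownOrder {A : ℕ → Prop} {Q : ℕ → ℕ → Prop}
    (hQ : SetComputable (codedSet Q)) (h : Isomorphic (crownOrder A) Q) : REPred A := by
  have hN : ∀ n, 1 ≤ cycleLength n := fun n => by unfold cycleLength; omega
  have hQ' : ComputablePred fun p : ℕ × ℕ => Q p.1 p.2 :=
    (hQ.comp Primrec₂.natPair.to_comp).of_eq fun p => by simp [codedSet]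
  refine (ComputablePred.rePred_exists (computablePred_isPendantCycleIn hQ')).of_eq fun n => ?_
  constructor
  · rintro ⟨k, hk⟩
    obtain ⟨φ, hφ⟩ := h.symm.exists_isPendantCycleIn hk
    exact hφ.crownOrder
  · intro hA
    obtain ⟨ψ, hψ⟩ := h.exists_isPendantCycleIn (isPendantCycleIn_crownOrder hA)
    exact hψ.exists_listFun (hN n)

theorem exists_coCE_partialOrder_not_iso_computable :
    ∃ P : ℕ → ℕ → Prop, PartialOrderRel P ∧ SetCoCE (codedSet P) ∧
      ∀ Q : ℕ → ℕ → Prop, PartialOrderRel Q → SetComputable (codedSet Q) → ¬ Isomorphic P Q := by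
  let A : ℕ → Prop := fun m => ¬((Denumerable.ofNat Nat.Partrec.Code m).eval 0).Dom
  have hA : REPred fun m => ¬A m :=
    ((ComputablePred.halting_problem_re 0).comp (Computable.ofNat _)).of_eq fun _ => not_not.symm
  refine ⟨crownOrder A, partialOrderRel_crownOrder A, setCoCE_crownOrder hA, fun Q _ hQ hiso => ?_⟩
  exact ComputablePred.halting_problem_not_re 0
    (((rePred_of_isomorphic_crownOrder hQ hiso).comp Computable.encode).of_eq fun c => by simp [A])

end CEOrders
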